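/- For n ≥ 1, the signed count over all overpartitions π of n, weighted by (-1)^{ℓ_{O≥N}(π)} where ℓ_{O≥N}(π) is the number of overlined parts of size ≥ the smallest non-overlined part (counting all overlined parts if there is no non-overlined part), equals 2·D_e(n), twice the number of distinct-part partitions of n with an even number of parts. -/

import Mathlib

open scoped Classical

/-- An overpartition of `n`: a finite set of overlined part sizes (the first
occurrence of a size may be overlined, so overlined parts are distinct)
together with a multiset of non-overlined parts, all parts positive,
with total sum `n`. -/
structure Overpartition (n : ℕ) where
  overl : Finset ℕ
  plain : Multiset ℕ
  over_pos : ∀ x ∈ overl, 0 < x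
  plain_pos : ∀ x ∈ plain, 0 < x
  sum_eq : (∑ x ∈ overl, x) + plain.sum = n
/-- Number of overlined parts of size at least the smallest non-overlined part;
all (overlined) parts count if there is no non-overlined part. -/
noncomputable def lOgeN {n : ℕ} (π : Overpartition n) : ℕ :=
  if π.plain = 0 then π.overl.card
  else (π.overl.filter (fun x => ∃ y ∈ π.plain, y ≤ x)).card

/-!
Overpartitions without non-overlined parts are exactly the partitions into distinct parts, and
on them `(-1) ^ lOgeN` is `(-1) ^ (number of parts)`.

On the others, let `N` be the smallest non-overlined part and let `m` be the smallest size `≥ N`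
that is overlined or occurs as a non-overlined part other than one copy of `N`. Toggling the
overline of one part of size `m` changes neither `N` nor `m`, so it is an involution, and it
changes `lOgeN` by one. What survives are the overpartitions with a single non-overlined part `N`
exceeding all overlined parts, each counted with `+1`; for `n ≥ 1`, overlining `N` maps them
bijectively onto the distinct partitions. So the signed count is `∑ λ ((-1) ^ #λ + 1) = 2 D_e(n)`.
-/

open Finset

theorem Multiset.ne_zero_of_mem {α : Type*} {s : Multiset α} {a : α} (h : a ∈ s) : s ≠ 0 :=
  ne_of_mem_of_not_mem' h (Multiset.notMem_zero a)

theorem Fintype.card_even_sub_card_odd {α : Type*} [Fintype α] (f : α → ℕ) :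
    (Nat.card {a // Even (f a)} : ℤ) - Nat.card {a // Odd (f a)} = ∑ a, (-1 : ℤ) ^ f a := by
  classical
  simp only [Nat.card_eq_fintype_card, Fintype.card_subtype, neg_one_pow_eq_ite, sum_ite,
    sum_const, ← Nat.not_even_iff_odd]
  simp [sub_eq_add_neg]

namespace Overpartition

variable {n : ℕ}

@[ext]
theorem ext {π ρ : Overpartition n} (h₁ : π.overl = ρ.overl) (h₂ : π.plain = ρ.plain) :
    π = ρ := by
  cases π; cases ρ; simp_all

def toPartition (π : Overpartition n) : n.Partition where
  parts := π.overl.val + π.plain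
  parts_pos hx := (Multiset.mem_add.mp hx).elim (π.over_pos _) (π.plain_pos _)
  parts_sum := by
    rw [Multiset.sum_add, sum_val]
    exact π.sum_eq

theorem overl_subset_range (π : Overpartition n) : π.overl ⊆ range (n + 1) := fun _ hx =>
  mem_range_succ_iff.mpr (π.toPartition.le_of_mem_parts (Multiset.mem_add.mpr (.inl hx)))

instance : Finite (Overpartition n) :=
  Finite.of_injective (β := n.Partition × {s : Finset ℕ // s ⊆ range (n + 1)})
    (fun π => (π.toPartition, ⟨π.overl, π.overl_subset_range⟩)) fun π ρ h => by
      simp only [Prod.mk.injEq, Subtype.mk.injEq, Nat.Partition.ext_iff, toPartition] at h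
      exact ext h.2 (add_left_cancel (h.2 ▸ h.1))

noncomputable instance : Fintype (Overpartition n) := Fintype.ofFinite _

variable {π : Overpartition n} {m x : ℕ}

@[simps]
def unoverline (π : Overpartition n) (hm : m ∈ π.overl) : Overpartition n where
  overl := π.overl.erase m
  plain := m ::ₘ π.plain
  over_pos x hx := π.over_pos x (mem_of_mem_erase hx)
  plain_pos x hx := (Multiset.mem_cons.mp hx).elim (· ▸ π.over_pos m hm) (π.plain_pos x)
  sum_eq := by
    have := add_sum_erase _ (fun x => x) hm
    have := π.sum_eq
    rw [Multiset.sum_cons]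
    omega

@[simps]
def overline (π : Overpartition n) (hm : m ∈ π.plain) (hm' : m ∉ π.overl) :
    Overpartition n where
  overl := insert m π.overl
  plain := π.plain.erase m
  over_pos x hx := (mem_insert.mp hx).elim (· ▸ π.plain_pos m hm) (π.over_pos x)
  plain_pos x hx := π.plain_pos x (Multiset.mem_of_mem_erase hx)
  sum_eq := by
    have := Multiset.sum_cons m (π.plain.erase m)
    rw [Multiset.cons_erase hm] at this
    have := π.sum_eq
    rw [sum_insert hm']
    omega

theorem overline_unoverline (hm : m ∈ π.overl) (h₁ : m ∈ (π.unoverline hm).plain)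
    (h₂ : m ∉ (π.unoverline hm).overl) : (π.unoverline hm).overline h₁ h₂ = π :=
  ext (insert_erase hm) (Multiset.erase_cons_head _ _)

theorem unoverline_overline (hm : m ∈ π.plain) (hm' : m ∉ π.overl)
    (h : m ∈ (π.overline hm hm').overl) : (π.overline hm hm').unoverline h = π :=
  ext (erase_insert hm') (Multiset.cons_erase hm)

/-- The smallest non-overlined part, `0` if there is none. -/
noncomputable def minPlain (π : Overpartition n) : ℕ := sInf {x | x ∈ π.plain}

theorem minPlain_mem (h : π.plain ≠ 0) : π.minPlain ∈ π.plain :=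
  Nat.sInf_mem (Multiset.exists_mem_of_ne_zero h)

theorem minPlain_le (hx : x ∈ π.plain) : π.minPlain ≤ x := Nat.sInf_le hx

theorem minPlain_eq (hm : m ∈ π.plain) (h : ∀ x ∈ π.plain, m ≤ x) : π.minPlain = m :=
  le_antisymm (minPlain_le hm) (h _ (minPlain_mem (Multiset.ne_zero_of_mem hm)))

theorem lOgeN_eq_card_filter (h : π.plain ≠ 0) :
    lOgeN π = #{x ∈ π.overl | π.minPlain ≤ x} := by
  rw [lOgeN, if_neg h]
  congr 1
  exact filter_congr fun x _ =>
    ⟨fun ⟨_, hy, hyx⟩ => (minPlain_le hy).trans hyx, fun hx => ⟨_, minPlain_mem h, hx⟩⟩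

def toggleSet (π : Overpartition n) : Set ℕ :=
  {x | π.minPlain ≤ x ∧ (x ∈ π.overl ∨ x ∈ π.plain.erase π.minPlain)}

theorem minPlain_unoverline (hp : π.plain ≠ 0) (hm : m ∈ π.overl) (hNm : π.minPlain ≤ m) :
    (π.unoverline hm).minPlain = π.minPlain :=
  minPlain_eq (Multiset.mem_cons_of_mem (minPlain_mem hp)) fun _ hx =>
    (Multiset.mem_cons.mp hx).elim (· ▸ hNm) minPlain_le

theorem toggleSet_unoverline (hp : π.plain ≠ 0) (hm : m ∈ π.overl) (hNm : π.minPlain ≤ m) :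
    (π.unoverline hm).toggleSet = π.toggleSet := by
  ext x
  simp only [toggleSet, Set.mem_ofPred_eq, minPlain_unoverline hp hm hNm, unoverline_overl,
    unoverline_plain, Multiset.erase_cons_tail_of_mem (minPlain_mem hp)]
  by_cases hx : x = m <;> simp [hx, hm]

theorem lOgeN_unoverline (hp : π.plain ≠ 0) (hm : m ∈ π.overl) (hNm : π.minPlain ≤ m) :
    lOgeN (π.unoverline hm) + 1 = lOgeN π := by
  rw [lOgeN_eq_card_filter Multiset.cons_ne_zero, lOgeN_eq_card_filter hp,
    minPlain_unoverline hp hm hNm, unoverline_overl, filter_erase,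
    card_erase_add_one (mem_filter.mpr ⟨hm, hNm⟩)]

theorem minPlain_mem_erase (hm : m ∈ π.plain.erase π.minPlain) :
    π.minPlain ∈ π.plain.erase m := by
  rcases eq_or_ne m π.minPlain with rfl | hne
  · exact hm
  · exact (Multiset.mem_erase_of_ne hne.symm).mpr
      (minPlain_mem (Multiset.ne_zero_of_mem (Multiset.mem_of_mem_erase hm)))

theorem minPlain_overline (hm : m ∈ π.plain) (hm' : m ∉ π.overl)
    (hmN : m ∈ π.plain.erase π.minPlain) : (π.overline hm hm').minPlain = π.minPlain :=
  minPlain_eq (minPlain_mem_erase hmN) fun _ hx => minPlain_le (Multiset.mem_of_mem_erase hx)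

theorem toggleSet_overline (hm : m ∈ π.plain) (hm' : m ∉ π.overl)
    (hmN : m ∈ π.plain.erase π.minPlain) : (π.overline hm hm').toggleSet = π.toggleSet := by
  ext x
  simp only [toggleSet, Set.mem_ofPred_eq, minPlain_overline hm hm' hmN, overline_overl,
    overline_plain, Multiset.erase_comm _ m]
  by_cases hx : x = m
  · subst hx; simp [hmN]
  · simp [hx, Multiset.mem_erase_of_ne hx]

theorem lOgeN_overline (hm : m ∈ π.plain) (hm' : m ∉ π.overl)
    (hmN : m ∈ π.plain.erase π.minPlain) : lOgeN (π.overline hm hm') = lOgeN π + 1 := by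
  rw [lOgeN_eq_card_filter (Multiset.ne_zero_of_mem (minPlain_mem_erase hmN)),
    lOgeN_eq_card_filter (Multiset.ne_zero_of_mem hm), minPlain_overline hm hm' hmN,
    overline_overl, filter_insert, if_pos (minPlain_le hm),
    card_insert_of_notMem fun h => hm' (mem_filter.mp h).1]

noncomputable def togglePart (π : Overpartition n) : ℕ := sInf π.toggleSet

noncomputable def toggle (π : Overpartition n) : Overpartition n :=
  if hm : π.togglePart ∈ π.overl then π.unoverline hm
  else if hp : π.togglePart ∈ π.plain then π.overline hp hm else π

def Toggleable (π : Overpartition n) : Prop := π.plain ≠ 0 ∧ π.toggleSet.Nonempty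

theorem toggle_eq_unoverline (h : π.togglePart = m) (hm : m ∈ π.overl) :
    π.toggle = π.unoverline hm := by
  subst h; exact dif_pos hm

theorem toggle_eq_overline (h : π.togglePart = m) (hp : m ∈ π.plain) (hm : m ∉ π.overl) :
    π.toggle = π.overline hp hm := by
  subst h; rw [toggle, dif_neg hm, dif_pos hp]

theorem Toggleable.toggle_spec (h : π.Toggleable) :
    π.toggle.Toggleable ∧ π.toggle.toggle = π ∧
      (-1 : ℤ) ^ lOgeN π.toggle = -(-1) ^ lOgeN π := by
  have hmem : π.togglePart ∈ π.toggleSet := Nat.sInf_mem h.2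
  by_cases hm : π.togglePart ∈ π.overl
  · have hS := toggleSet_unoverline h.1 hm hmem.1
    have hρ : (π.unoverline hm).togglePart = π.togglePart := congrArg sInf hS
    rw [toggle_eq_unoverline rfl hm,
      toggle_eq_overline hρ (Multiset.mem_cons_self _ _) (notMem_erase _ _)]
    refine ⟨⟨Multiset.cons_ne_zero, hS ▸ h.2⟩, overline_unoverline hm _ _, ?_⟩
    rw [← lOgeN_unoverline h.1 hm hmem.1, pow_succ]
    ring
  · have hmN : π.togglePart ∈ π.plain.erase π.minPlain := hmem.2.resolve_left hm
    have hp := Multiset.mem_of_mem_erase hmN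
    have hS := toggleSet_overline hp hm hmN
    have hρ : (π.overline hp hm).togglePart = π.togglePart := congrArg sInf hS
    rw [toggle_eq_overline rfl hp hm, toggle_eq_unoverline hρ (mem_insert_self _ _)]
    refine ⟨⟨Multiset.ne_zero_of_mem (minPlain_mem_erase hmN), hS ▸ h.2⟩,
      unoverline_overline hp hm _, ?_⟩
    rw [lOgeN_overline hp hm hmN, pow_succ]
    ring

theorem sum_toggleable : ∑ π : Overpartition n with π.Toggleable, (-1 : ℤ) ^ lOgeN π = 0 :=
  sum_involution (fun π _ => π.toggle)
    (fun π hπ => by rw [(mem_filter.mp hπ).2.toggle_spec.2.2]; ring)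
    (fun π hπ hne heq => hne (by linarith [heq ▸ (mem_filter.mp hπ).2.toggle_spec.2.2]))
    (fun π hπ => mem_filter.mpr ⟨mem_univ _, (mem_filter.mp hπ).2.toggle_spec.1⟩)
    (fun π hπ => (mem_filter.mp hπ).2.toggle_spec.2.1)

def IsFixed (π : Overpartition n) : Prop := π.plain ≠ 0 ∧ π.toggleSet = ∅

theorem sum_eq_add_sum_toggleable_add_sum_isFixed (f : Overpartition n → ℤ) :
    ∑ π, f π = ∑ π with π.plain = 0, f π + ∑ π with π.Toggleable, f π +
      ∑ π with π.IsFixed, f π := by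
  rw [add_assoc, ← sum_union, ← sum_filter_add_sum_filter_not univ (fun π => π.plain = 0)]
  · congr 2
    ext π
    simp only [mem_filter, mem_univ, true_and, mem_union]
    simp only [Toggleable, IsFixed, ← Set.not_nonempty_iff_eq_empty]
    tauto
  · exact disjoint_filter.mpr fun π _ h h' => h.2.ne_empty h'.2

theorem IsFixed.plain_ne_zero (h : π.IsFixed) : π.plain ≠ 0 := h.1

theorem IsFixed.lt_minPlain (h : π.IsFixed) (hx : x ∈ π.overl) : x < π.minPlain :=
  lt_of_not_ge fun hle => Set.eq_empty_iff_forall_notMem.mp h.2 x ⟨hle, .inl hx⟩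

theorem IsFixed.minPlain_notMem_overl (h : π.IsFixed) : π.minPlain ∉ π.overl :=
  fun hN => lt_irrefl _ (h.lt_minPlain hN)

theorem IsFixed.plain_eq (h : π.IsFixed) : π.plain = {π.minPlain} := by
  have : π.plain.erase π.minPlain = 0 := Multiset.eq_zero_of_forall_notMem fun x hx =>
    Set.eq_empty_iff_forall_notMem.mp h.2 x
      ⟨minPlain_le (Multiset.mem_of_mem_erase hx), .inr hx⟩
  rw [← Multiset.cons_erase (minPlain_mem h.1), this]
  rfl

theorem IsFixed.lOgeN_eq_zero (h : π.IsFixed) : lOgeN π = 0 := by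
  rw [lOgeN_eq_card_filter h.1, card_eq_zero, filter_eq_empty_iff]
  exact fun x hx => not_le.mpr (h.lt_minPlain hx)

theorem minPlain_unoverline_max' (hp : π.plain = 0) (hne : π.overl.Nonempty) :
    (π.unoverline (π.overl.max'_mem hne)).minPlain = π.overl.max' hne :=
  minPlain_eq (Multiset.mem_cons_self _ _) (by simpa [hp] using π.overl.le_max')

theorem isFixed_unoverline_max' (hp : π.plain = 0) (hne : π.overl.Nonempty) :
    (π.unoverline (π.overl.max'_mem hne)).IsFixed := by
  refine ⟨Multiset.cons_ne_zero, Set.eq_empty_of_forall_notMem fun x ⟨hle, hx⟩ => ?_⟩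
  rw [minPlain_unoverline_max' hp] at hle hx
  rcases hx with hx | hx
  · exact (mem_erase.mp hx).1 (le_antisymm (π.overl.le_max' x (mem_of_mem_erase hx)) hle)
  · simp [hp] at hx

theorem overl_nonempty (hn : 1 ≤ n) (hp : π.plain = 0) : π.overl.Nonempty := by
  rw [nonempty_iff_ne_empty]
  intro h
  have := π.sum_eq
  simp [h, hp] at this
  omega

noncomputable def isFixedEquiv (hn : 1 ≤ n) :
    {π : Overpartition n // π.IsFixed} ≃ {π : Overpartition n // π.plain = 0} where
  toFun π := ⟨π.1.overline (minPlain_mem π.2.plain_ne_zero) π.2.minPlain_notMem_overl,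
    by rw [overline_plain, π.2.plain_eq, Multiset.erase_singleton]⟩
  invFun ρ := ⟨ρ.1.unoverline (ρ.1.overl.max'_mem (overl_nonempty hn ρ.2)),
    isFixed_unoverline_max' ρ.2 _⟩
  left_inv := by
    rintro ⟨π, hπ⟩
    have hmax : ∀ h, (insert π.minPlain π.overl).max' h = π.minPlain := fun _ =>
      le_antisymm (max'_le _ _ _ fun _ hx => (mem_insert.mp hx).elim le_of_eq
        fun hx => (hπ.lt_minPlain hx).le) (le_max' _ _ (mem_insert_self _ _))
    refine Subtype.ext (ext ?_ ?_)
    · simp only [unoverline_overl, overline_overl, hmax, erase_insert hπ.minPlain_notMem_overl]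
    · simp only [unoverline_plain, overline_plain, overline_overl, hmax,
        Multiset.cons_erase (minPlain_mem hπ.plain_ne_zero)]
  right_inv := by
    rintro ⟨ρ, hρ⟩
    refine Subtype.ext (ext ?_ ?_)
    · simp only [overline_overl, unoverline_overl, minPlain_unoverline_max' hρ,
        insert_erase (max'_mem _ _)]
    · simp only [overline_plain, unoverline_plain, minPlain_unoverline_max' hρ,
        Multiset.erase_cons_head]

theorem sum_isFixed (hn : 1 ≤ n) :
    ∑ π : Overpartition n with π.IsFixed, (-1 : ℤ) ^ lOgeN π =
      #{π : Overpartition n | π.plain = 0} := by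
  rw [sum_congr rfl fun π hπ => by rw [(mem_filter.mp hπ).2.lOgeN_eq_zero, pow_zero], sum_const,
    nsmul_one, ← Fintype.card_subtype, ← Fintype.card_subtype,
    Fintype.card_congr (isFixedEquiv hn)]

theorem sum_plain_eq_zero_add_card :
    ∑ π : Overpartition n with π.plain = 0, (-1 : ℤ) ^ lOgeN π +
        #{π : Overpartition n | π.plain = 0} =
      2 * #{π : Overpartition n | π.plain = 0 ∧ Even #π.overl} := by
  rw [← filter_filter, natCast_card_filter (fun π : Overpartition n => Even #π.overl),
    card_eq_sum_ones, Nat.cast_sum, Nat.cast_one, ← sum_add_distrib, mul_sum]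
  refine sum_congr rfl fun π hπ => ?_
  rw [lOgeN, if_pos (mem_filter.mp hπ).2, neg_one_pow_eq_ite]
  split_ifs <;> norm_num

def evenPlainFreeEquiv :
    {π : Overpartition n // π.plain = 0 ∧ Even #π.overl} ≃
      {p : n.Partition // p.parts.Nodup ∧ Even (Multiset.card p.parts)} where
  toFun π :=
    ⟨⟨π.1.overl.val, π.1.over_pos _, by simpa [π.2.1, sum_val] using π.1.sum_eq⟩,
      π.1.overl.nodup, π.2.2⟩
  invFun p := ⟨⟨⟨p.1.parts, p.2.1⟩, 0, fun _ => p.1.parts_pos, by simp,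
    by simpa [sum_val] using p.1.parts_sum⟩, rfl, p.2.2⟩
  left_inv π := Subtype.ext (ext rfl π.2.1.symm)
  right_inv _ := rfl

end Overpartition

theorem stmt_8 (n : ℕ) (hn : 1 ≤ n) :
    (Nat.card {π : Overpartition n // Even (lOgeN π)} : ℤ) -
      Nat.card {π : Overpartition n // Odd (lOgeN π)} =
    2 * Nat.card {p : n.Partition //
        p.parts.Nodup ∧ Even (Multiset.card p.parts)} := by
  rw [Fintype.card_even_sub_card_odd,
    Overpartition.sum_eq_add_sum_toggleable_add_sum_isFixed, Overpartition.sum_toggleable,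
    add_zero, Overpartition.sum_isFixed hn, Overpartition.sum_plain_eq_zero_add_card,
    ← Nat.card_congr Overpartition.evenPlainFreeEquiv, Nat.card_eq_fintype_card,
    Fintype.card_subtype]
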